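/- Under the shared-Bernoulli coupling of Greedy and OPT with geometric usage durations F_i = Geometric(p_i) and p = min_i p_i, LOST ≤ (1 - p) · ( Greedy(I) − Σ_{t=1}^T Σ_{i=1}^N r_i · Pr(A*_t = A_t = i) ). -/

import Mathlib

open Finset

/-- An online policy for the online matching problem with reusable resources,
with `N` resources, `T` requests, and neighborhoods `Nbr`.  Upon arrival of
request `t`, the policy observes the time `t`, the set of currently available
resources, and the history of previously observed availability sets, and
matches the request to at most one available resource adjacent to `t`
(`none` means no match). -/
structure Policy (N T : ℕ) (Nbr : Fin T → Finset (Fin N)) where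
  act : Fin T → Finset (Fin N) → List (Finset (Fin N)) → Option (Fin N)
  feasible : ∀ t I hist i, act t I hist = some i → i ∈ I ∩ Nbr t

/-- Sample space of the shared-Bernoulli coupling for geometric usage
durations: `ω i t` is the return flag `P_{it} ~ Bernoulli (p i)`.  A resource
`i` that is unavailable returns at the start of time `t` iff `ω i t = true`;
this makes the usage duration of every match of `i` distributed as
`Geometric (p i)` on `{1, 2, ...}`. -/
abbrev Flags (N T : ℕ) := Fin N → Fin T → Bool

/-- One step of the dynamics at time `t`.  The state is the pair consisting of
the set of resources unavailable at the end of the previous step and the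
history of observed availability sets. -/
def step {N T : ℕ} {Nbr : Fin T → Finset (Fin N)} (π : Policy N T Nbr)
    (ω : Flags N T) (s : Finset (Fin N) × List (Finset (Fin N))) (t : Fin T) :
    Finset (Fin N) × List (Finset (Fin N)) :=
  let busy := s.1.filter fun i => ω i t = false
  let I : Finset (Fin N) := Finset.univ \ busy
  match π.act t I s.2 with
  | none => (busy, I :: s.2)
  | some i => (insert i busy, I :: s.2)

/-- The state just before step `n` (resources unavailable at the end of step
`n-1`, together with the observed history). -/
def stateUpTo {N T : ℕ} {Nbr : Fin T → Finset (Fin N)} (π : Policy N T Nbr)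
    (ω : Flags N T) (n : ℕ) : Finset (Fin N) × List (Finset (Fin N)) :=
  ((List.finRange T).take n).foldl (step π ω) (∅, [])

/-- `I_t`: the set of resources available at time `t` under policy `π`. -/
def avail {N T : ℕ} {Nbr : Fin T → Finset (Fin N)} (π : Policy N T Nbr)
    (ω : Flags N T) (t : Fin T) : Finset (Fin N) :=
  Finset.univ \ ((stateUpTo π ω t.val).1.filter fun i => ω i t = false)

/-- `A_t`: the resource matched at time `t` under policy `π` (`none` = no match). -/
def act {N T : ℕ} {Nbr : Fin T → Finset (Fin N)} (π : Policy N T Nbr)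
    (ω : Flags N T) (t : Fin T) : Option (Fin N) :=
  π.act t (avail π ω t) (stateUpTo π ω t.val).2

/-- The total reward collected by policy `π` on the sample path `ω`. -/
def reward {N T : ℕ} {Nbr : Fin T → Finset (Fin N)} (r : Fin N → ℝ)
    (π : Policy N T Nbr) (ω : Flags N T) : ℝ :=
  ∑ t : Fin T, (act π ω t).elim 0 r

/-- Probability of the flag configuration `ω` when `P_{it} ~ Bernoulli (p i)`
independently. -/
noncomputable def weight {N T : ℕ} (p : Fin N → ℝ) (ω : Flags N T) : ℝ :=
  ∏ i : Fin N, ∏ t : Fin T, if ω i t then p i else 1 - p i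

/-- Expectation over the i.i.d. Bernoulli return flags. -/
noncomputable def expect {N T : ℕ} (p : Fin N → ℝ) (f : Flags N T → ℝ) : ℝ :=
  ∑ ω : Flags N T, weight p ω * f ω

/-- The greedy policy: match the available neighboring resource of largest
index (equivalently, of highest reward, since rewards are sorted). -/
def greedy (N T : ℕ) (Nbr : Fin T → Finset (Fin N)) : Policy N T Nbr where
  act := fun t I _ => if h : (I ∩ Nbr t).Nonempty then some ((I ∩ Nbr t).max' h) else none
  feasible := by
    intro t I hist i hi
    try simp only at hi
    by_cases h : (I ∩ Nbr t).Nonempty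
    · rw [dif_pos h, Option.some.injEq] at hi
      exact hi ▸ Finset.max'_mem _ h
    · rw [dif_neg h] at hi
      exact absurd hi (by simp)

/-- `Greedy(I)`: the expected total reward of the greedy policy. -/
noncomputable def greedyVal (N T : ℕ) (Nbr : Fin T → Finset (Fin N))
    (r : Fin N → ℝ) (p : Fin N → ℝ) : ℝ :=
  expect p (reward r (greedy N T Nbr))

/-- `OPT(I)`: the optimal expected total reward over all (clairvoyant)
policies; such a policy knows the whole instance, including the request
sequence, but observes returns only as they occur. -/
noncomputable def optVal (N T : ℕ) (Nbr : Fin T → Finset (Fin N))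
    (r : Fin N → ℝ) (p : Fin N → ℝ) : ℝ :=
  ⨆ π : Policy N T Nbr, expect p (reward r π)

/-- `LOST`: the expected reward collected by the benchmark policy `π` (playing
the role of `OPT`, coupled with Greedy via the shared Bernoulli return flags)
at `(i, t)` such that `A*_t = i` and the event `O_{it}` occurs, where `O_{it}`
is the event that every resource `j ≥ i` is unavailable under Greedy at time
`t`. -/
noncomputable def lost (N T : ℕ) (Nbr : Fin T → Finset (Fin N)) (r : Fin N → ℝ)
    (pv : Fin N → ℝ) (π : Policy N T Nbr) : ℝ :=
  expect pv (fun ω => ∑ t : Fin T, ∑ i : Fin N,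
    if act π ω t = some i ∧ (∀ j, i ≤ j → j ∉ avail (greedy N T Nbr) ω t)
    then r i else 0)

/-!
On `O_{it}` resource `i` itself is unavailable to Greedy, so it suffices to bound the reward
OPT earns from matches of `i` at times when Greedy holds `i`. Charge each such match to
Greedy's last match of `i`, at `t'` say. Since the shared flags `P_{is}` vanish on `(t', t]`,
OPT cannot have matched `i` at `t'` (it would still hold `i` at `t`), two such matches of OPT
cannot share `t'` (the earlier one would block the later), and `P_{i,t'+1} = 0`. The event
"Greedy but not OPT matches `i` at `t'`" depends only on flags up to time `t'`, so the
independent flag `P_{i,t'+1}` contributes a factor `1 - p_i ≤ 1 - p`, and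
`Pr(A_t = i, A*_t ≠ i) = Pr(A_t = i) - Pr(A_t = A*_t = i)`.
-/

section Dynamics

variable {N T : ℕ} {Nbr : Fin T → Finset (Fin N)} (π : Policy N T Nbr) (ω : Flags N T)

lemma stateUpTo_succ (n : ℕ) (h : n < T) :
    stateUpTo π ω (n + 1) = step π ω (stateUpTo π ω n) ⟨n, h⟩ := by
  rw [stateUpTo, List.take_add_one, List.getElem?_eq_getElem (by simpa using h)]
  simp [stateUpTo]

lemma mem_stateUpTo_succ_fst (n : ℕ) (h : n < T) (i : Fin N) :
    i ∈ (stateUpTo π ω (n + 1)).1 ↔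
      (i ∈ (stateUpTo π ω n).1 ∧ ω i ⟨n, h⟩ = false) ∨ act π ω ⟨n, h⟩ = some i := by
  simp only [stateUpTo_succ π ω n h, step, act, avail]
  split <;> rename_i heq
  · simp [heq]
  · simp only [heq, Finset.mem_insert, Finset.mem_filter, Option.some.injEq]
    tauto

lemma mem_stateUpTo_fst_iff (i : Fin N) (n : ℕ) (hn : n ≤ T) :
    i ∈ (stateUpTo π ω n).1 ↔ ∃ t' : Fin T, t'.val < n ∧ act π ω t' = some i ∧
      ∀ s : Fin T, t' < s → s.val < n → ω i s = false := by
  induction n with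
  | zero => simp [stateUpTo]
  | succ m ih =>
    have hm : m < T := hn
    rw [mem_stateUpTo_succ_fst π ω m hm, ih hm.le]
    constructor
    · rintro (⟨⟨t', ht', hact, hflags⟩, hflag⟩ | hact)
      · refine ⟨t', by omega, hact, fun s hs hsm => ?_⟩
        rcases Nat.lt_succ_iff_lt_or_eq.mp hsm with hsm | hsm
        · exact hflags s hs hsm
        · rwa [show s = ⟨m, hm⟩ from Fin.ext hsm]
      · exact ⟨⟨m, hm⟩, by simp, hact, fun s hs hsm => by simp [Fin.lt_def] at hs; omega⟩
    · rintro ⟨t', ht', hact, hflags⟩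
      rcases Nat.lt_succ_iff_lt_or_eq.mp ht' with ht' | ht'
      · exact Or.inl ⟨⟨t', ht', hact, fun s hs hsm => hflags s hs (by omega)⟩,
          hflags _ (Fin.lt_def.mpr ht') (by simp)⟩
      · exact Or.inr (by rwa [show t' = ⟨m, hm⟩ from Fin.ext ht'] at hact)

def HeldSince (i : Fin N) (t' t : Fin T) : Prop :=
  t' < t ∧ act π ω t' = some i ∧ ∀ s, t' < s → s ≤ t → ω i s = false

lemma notMem_avail_iff (i : Fin N) (t : Fin T) :
    i ∉ avail π ω t ↔ ∃ t', HeldSince π ω i t' t := by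
  simp only [avail, Finset.mem_sdiff, Finset.mem_univ, true_and, not_not, Finset.mem_filter,
    mem_stateUpTo_fst_iff π ω i t.val t.isLt.le, HeldSince]
  constructor
  · rintro ⟨⟨t', ht', hact, hflags⟩, hflag⟩
    refine ⟨t', ht', hact, fun s hs hst => ?_⟩
    rcases hst.lt_or_eq with hst | rfl
    exacts [hflags s hs hst, hflag]
  · rintro ⟨t', ht', hact, hflags⟩
    exact ⟨⟨t', ht', hact, fun s hs hst => hflags s hs hst.le⟩, hflags t ht' le_rfl⟩

lemma act_mem_avail {t : Fin T} {i : Fin N} (h : act π ω t = some i) : i ∈ avail π ω t :=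
  (Finset.mem_inter.mp (π.feasible _ _ _ i h)).1

lemma not_heldSince_of_act_eq {i : Fin N} {t' t : Fin T} (h : act π ω t = some i) :
    ¬ HeldSince π ω i t' t :=
  fun hheld => (notMem_avail_iff π ω i t).mpr ⟨t', hheld⟩ (act_mem_avail π ω h)

/-- Holding a resource depends only on the flags, not on which policy made the match. -/
lemma HeldSince.of_le {σ : Policy N T Nbr} {i : Fin N} {t' t₁ t : Fin T}
    (h : HeldSince σ ω i t' t) (hle : t' ≤ t₁) (hlt : t₁ < t) (hact : act π ω t₁ = some i) :
    HeldSince π ω i t₁ t :=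
  ⟨hlt, hact, fun s hs hst => h.2.2 s (hle.trans_lt hs) hst⟩

lemma stateUpTo_congr {ω₁ ω₂ : Flags N T} (n : ℕ) (hn : n ≤ T)
    (h : ∀ j (s : Fin T), s.val < n → ω₁ j s = ω₂ j s) :
    stateUpTo π ω₁ n = stateUpTo π ω₂ n := by
  induction n with
  | zero => rfl
  | succ m ih =>
    have hm : m < T := hn
    rw [stateUpTo_succ π ω₁ m hm, stateUpTo_succ π ω₂ m hm,
      ih hm.le fun j s hs => h j s (by omega)]
    simp only [step, h _ ⟨m, hm⟩ (Nat.lt_succ_self m)]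

lemma act_congr {ω₁ ω₂ : Flags N T} (t : Fin T) (h : ∀ j s, s ≤ t → ω₁ j s = ω₂ j s) :
    act π ω₁ t = act π ω₂ t := by
  have hst := stateUpTo_congr π t.val t.isLt.le fun j s hs => h j s (Fin.lt_def.mpr hs).le
  simp only [act, avail, hst, h _ t le_rfl]

end Dynamics

section Charging

variable {N T : ℕ} {Nbr : Fin T → Finset (Fin N)} (σ π : Policy N T Nbr) (ω : Flags N T)

def Charged (i : Fin N) (t : Fin T) : Prop :=
  act σ ω t = some i ∧ act π ω t ≠ some i ∧ ∃ u : Fin T, u.val = t.val + 1 ∧ ω i u = false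

open Classical in
/-- Each match of `i` by `π` at a time when `σ` holds `i` is charged to the last match of `i`
by `σ`; two such matches of `π` cannot share it, since `i` must return between them. -/
lemma card_act_notMem_avail_le_card_charged (i : Fin N) :
    #{t | act π ω t = some i ∧ i ∉ avail σ ω t} ≤ #{t | Charged σ π ω i t} := by
  refine Finset.card_le_card_of_forall_subsingleton (fun t t' => HeldSince σ ω i t' t) ?_ ?_
  · intro t ht
    obtain ⟨hπ, hσ⟩ := (Finset.mem_filter.mp ht).2
    obtain ⟨t', hheld⟩ := (notMem_avail_iff σ ω i t).mp hσ
    have hlt : t'.val + 1 < T := by have := Fin.lt_def.mp hheld.1; omega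
    refine ⟨t', Finset.mem_filter.mpr ⟨Finset.mem_univ _, hheld.2.1, fun hπ' => ?_,
      ⟨⟨t'.val + 1, hlt⟩, rfl, hheld.2.2 _ (Fin.lt_def.mpr (by simp)) ?_⟩⟩, hheld⟩
    · exact not_heldSince_of_act_eq π ω hπ (hheld.of_le π ω le_rfl hheld.1 hπ')
    · exact Fin.le_def.mpr (by simpa using Fin.lt_def.mp hheld.1)
  · intro t' _ t₁ ht₁ t₂ ht₂
    simp only [Finset.mem_filter, Finset.mem_univ, true_and] at ht₁ ht₂
    have key : ∀ {a b : Fin T}, a < b → act π ω a = some i → HeldSince σ ω i t' a →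
        act π ω b = some i → HeldSince σ ω i t' b → False := fun hab ha hheld_a hb hheld_b =>
      not_heldSince_of_act_eq π ω hb (hheld_b.of_le π ω hheld_a.1.le hab ha)
    rcases lt_trichotomy t₁ t₂ with h | h | h
    exacts [(key h ht₁.1.1 ht₁.2 ht₂.1.1 ht₂.2).elim, h, (key h ht₂.1.1 ht₂.2 ht₁.1.1 ht₁.2).elim]

end Charging

section Expectation

variable {N T : ℕ} (pv : Fin N → ℝ)

lemma expect_sub (f g : Flags N T → ℝ) :
    expect pv (fun ω => f ω - g ω) = expect pv f - expect pv g := by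
  simp only [_root_.expect, mul_sub, Finset.sum_sub_distrib]

lemma expect_const_mul (c : ℝ) (f : Flags N T → ℝ) :
    expect pv (fun ω => c * f ω) = c * expect pv f := by
  simp only [_root_.expect, Finset.mul_sum]
  exact Finset.sum_congr rfl fun _ _ => by ring

lemma expect_sum {ι : Type*} (s : Finset ι) (f : ι → Flags N T → ℝ) :
    expect pv (fun ω => ∑ k ∈ s, f k ω) = ∑ k ∈ s, expect pv (f k) := by
  simp only [_root_.expect, Finset.mul_sum]
  exact Finset.sum_comm

variable {pv}

lemma weight_nonneg (hpv0 : ∀ i, 0 ≤ pv i) (hpv1 : ∀ i, pv i ≤ 1) (ω : Flags N T) : 0 ≤ weight pv ω :=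
  Finset.prod_nonneg fun j _ => Finset.prod_nonneg fun t _ => by
    split_ifs
    exacts [hpv0 j, sub_nonneg.mpr (hpv1 j)]

lemma expect_mono (hpv0 : ∀ i, 0 ≤ pv i) (hpv1 : ∀ i, pv i ≤ 1) {f g : Flags N T → ℝ} (h : ∀ ω, f ω ≤ g ω) : expect pv f ≤ expect pv g :=
  Finset.sum_le_sum fun ω _ => mul_le_mul_of_nonneg_left (h ω) (weight_nonneg hpv0 hpv1 ω)

lemma expect_nonneg (hpv0 : ∀ i, 0 ≤ pv i) (hpv1 : ∀ i, pv i ≤ 1) {f : Flags N T → ℝ} (h : ∀ ω, 0 ≤ f ω) : 0 ≤ expect pv f :=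
  Finset.sum_nonneg fun ω _ => mul_nonneg (weight_nonneg hpv0 hpv1 ω) (h ω)

end Expectation

section Flip

variable {N T : ℕ}

def flipFlag (ω : Flags N T) (i : Fin N) (u : Fin T) : Flags N T :=
  fun j s => if j = i ∧ s = u then !ω j s else ω j s

lemma flipFlag_self (ω : Flags N T) (i : Fin N) (u : Fin T) :
    flipFlag ω i u i u = !ω i u := by
  simp [flipFlag]

lemma flipFlag_of_ne (ω : Flags N T) {i j : Fin N} {u s : Fin T} (h : ¬(j = i ∧ s = u)) :
    flipFlag ω i u j s = ω j s := by
  simp [flipFlag, h]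

lemma flipFlag_involutive (i : Fin N) (u : Fin T) :
    Function.Involutive fun ω : Flags N T => flipFlag ω i u := by
  intro ω
  funext j s
  by_cases h : j = i ∧ s = u
  · obtain ⟨rfl, rfl⟩ := h
    simp [flipFlag_self]
  · simp [flipFlag_of_ne _ h]

lemma exists_weight_flipFlag (pv : Fin N → ℝ) (ω : Flags N T) (i : Fin N) (u : Fin T) :
    ∃ W, weight pv ω = (if ω i u then pv i else 1 - pv i) * W ∧
      weight pv (flipFlag ω i u) = (if !ω i u then pv i else 1 - pv i) * W := by
  have split (ω : Flags N T) : weight pv ω = (if ω i u then pv i else 1 - pv i) *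
      ((∏ j ∈ univ.erase i, ∏ t, if ω j t then pv j else 1 - pv j) *
        ∏ t ∈ univ.erase u, if ω i t then pv i else 1 - pv i) := by
    rw [weight, ← Finset.mul_prod_erase univ _ (mem_univ i),
      ← Finset.mul_prod_erase univ _ (mem_univ u)]
    ring
  refine ⟨_, split ω, ?_⟩
  rw [split, flipFlag_self]
  congr 2
  · refine Finset.prod_congr rfl fun j hj => Finset.prod_congr rfl fun t _ => ?_
    rw [flipFlag_of_ne ω fun h => (Finset.mem_erase.mp hj).1 h.1]
  · refine Finset.prod_congr rfl fun t ht => ?_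
    rw [flipFlag_of_ne ω fun h => (Finset.mem_erase.mp ht).1 h.2]

/-- Pairing `ω` with its flip at `(i, u)`, exactly one of the two has `ω i u = false`, and it
carries the fraction `1 - pv i` of the pair's total weight. -/
lemma expect_ite_flag_eq_false (pv : Fin N → ℝ) {f : Flags N T → ℝ} (i : Fin N) (u : Fin T)
    (hf : ∀ ω, f (flipFlag ω i u) = f ω) :
    expect pv (fun ω => if ω i u = false then f ω else 0) = (1 - pv i) * expect pv f := by
  have hsum (g : Flags N T → ℝ) : ∑ ω, g (flipFlag ω i u) = ∑ ω, g ω :=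
    Equiv.sum_comp (flipFlag_involutive i u).toPerm g
  have hpair (ω : Flags N T) :
      weight pv ω * (if ω i u = false then f ω else 0) +
        weight pv (flipFlag ω i u) *
          (if flipFlag ω i u i u = false then f (flipFlag ω i u) else 0) =
      (1 - pv i) * (weight pv ω * f ω + weight pv (flipFlag ω i u) * f (flipFlag ω i u)) := by
    obtain ⟨W, hω, hflip⟩ := exists_weight_flipFlag pv ω i u
    rw [hω, hflip, hf, flipFlag_self]
    cases ω i u <;> simp <;> ring
  have h := Finset.sum_congr rfl fun ω (_ : ω ∈ univ) => hpair ω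
  rw [Finset.sum_add_distrib, ← Finset.mul_sum, Finset.sum_add_distrib,
    hsum fun ω => weight pv ω * (if ω i u = false then f ω else 0),
    hsum fun ω => weight pv ω * f ω] at h
  unfold _root_.expect
  linear_combination h / 2

end Flip

section Lost

variable {N T : ℕ} {Nbr : Fin T → Finset (Fin N)} (σ π : Policy N T Nbr) {pv : Fin N → ℝ}

lemma reward_eq_sum (r : Fin N → ℝ) (ω : Flags N T) :
    reward r σ ω = ∑ t, ∑ i, r i * if act σ ω t = some i then 1 else 0 := by
  refine Finset.sum_congr rfl fun t _ => ?_
  rcases act σ ω t with _ | j <;> simp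

open Classical in
lemma sum_held_le_sum_charged (r : Fin N → ℝ) (hr0 : ∀ i, 0 ≤ r i) (ω : Flags N T) :
    ∑ t, ∑ i, (if act π ω t = some i ∧ i ∉ avail σ ω t then r i else 0) ≤
      ∑ t, ∑ i, r i * if Charged σ π ω i t then 1 else 0 := by
  rw [Finset.sum_comm]
  conv_rhs => rw [Finset.sum_comm]
  refine Finset.sum_le_sum fun i _ => ?_
  simp only [mul_boole]
  rw [← Finset.sum_filter, ← Finset.sum_filter, Finset.sum_const, Finset.sum_const,
    nsmul_eq_mul, nsmul_eq_mul]
  exact mul_le_mul_of_nonneg_right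
    (by exact_mod_cast card_act_notMem_avail_le_card_charged σ π ω i) (hr0 i)

open Classical in
lemma expect_charged_le (hpv0 : ∀ i, 0 ≤ pv i) (hpv1 : ∀ i, pv i ≤ 1) {p : ℝ} {i : Fin N}
    (hp : p ≤ pv i) (t : Fin T) :
    expect pv (fun ω => if Charged σ π ω i t then 1 else 0) ≤
      (1 - p) * (expect pv (fun ω => if act σ ω t = some i then 1 else 0) -
        expect pv (fun ω => if act π ω t = some i ∧ act σ ω t = some i then 1 else 0)) := by
  rw [← expect_sub]
  have hbase (ω : Flags N T) : ((if act σ ω t = some i then 1 else 0) -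
      if act π ω t = some i ∧ act σ ω t = some i then 1 else 0 : ℝ) =
      if act σ ω t = some i ∧ act π ω t ≠ some i then 1 else 0 := by
    by_cases hσ : act σ ω t = some i <;> by_cases hπ : act π ω t = some i <;> simp [hσ, hπ]
  simp only [hbase]
  have hbase_nonneg := expect_nonneg hpv0 hpv1 (f := fun ω =>
    if act σ ω t = some i ∧ act π ω t ≠ some i then (1 : ℝ) else 0) fun ω => by
      split_ifs <;> norm_num
  refine le_trans ?_ (mul_le_mul_of_nonneg_right (by linarith : 1 - pv i ≤ 1 - p) hbase_nonneg)
  by_cases ht : t.val + 1 < T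
  · set u : Fin T := ⟨t.val + 1, ht⟩
    have hcharged (ω : Flags N T) : Charged σ π ω i t ↔
        ω i u = false ∧ act σ ω t = some i ∧ act π ω t ≠ some i := by
      refine ⟨fun ⟨hσ, hπ, v, hv, hflag⟩ => ⟨(show v = u from Fin.ext hv) ▸ hflag, hσ, hπ⟩,
        fun ⟨hflag, hσ, hπ⟩ => ⟨hσ, hπ, u, rfl, hflag⟩⟩
    simp only [hcharged, ite_and]
    refine (expect_ite_flag_eq_false pv i u fun ω => ?_).le
    have hpast : ∀ j s, s ≤ t → flipFlag ω i u j s = ω j s := fun j s hs =>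
      flipFlag_of_ne ω fun h => by simp [h.2, u, Fin.le_def] at hs
    rw [act_congr σ t hpast, act_congr π t hpast]
  · have hnot (ω : Flags N T) : ¬ Charged σ π ω i t := fun ⟨_, _, v, hv, _⟩ => ht (hv ▸ v.isLt)
    simp only [hnot, if_false]
    calc expect pv (fun _ => (0 : ℝ)) = 0 := by simp [_root_.expect]
      _ ≤ _ := mul_nonneg (sub_nonneg.mpr (hpv1 i)) hbase_nonneg

theorem expect_sum_held_le (r : Fin N → ℝ) (hr0 : ∀ i, 0 ≤ r i) (hpv0 : ∀ i, 0 ≤ pv i)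
    (hpv1 : ∀ i, pv i ≤ 1) {p : ℝ} (hp : ∀ i, p ≤ pv i) :
    expect pv (fun ω => ∑ t, ∑ i, if act π ω t = some i ∧ i ∉ avail σ ω t then r i else 0) ≤
      (1 - p) * (expect pv (reward r σ) - ∑ t, ∑ i, r i *
        expect pv (fun ω => if act π ω t = some i ∧ act σ ω t = some i then 1 else 0)) := by
  classical
  calc _ ≤ expect pv (fun ω => ∑ t, ∑ i, r i * if Charged σ π ω i t then 1 else 0) :=
        expect_mono hpv0 hpv1 (sum_held_le_sum_charged σ π r hr0)
    _ = ∑ t, ∑ i, r i * expect pv (fun ω => if Charged σ π ω i t then 1 else 0) := by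
        simp only [expect_sum, expect_const_mul]
    _ ≤ ∑ t, ∑ i, r i * ((1 - p) *
          (expect pv (fun ω => if act σ ω t = some i then 1 else 0) -
            expect pv (fun ω => if act π ω t = some i ∧ act σ ω t = some i then 1 else 0))) := by
        gcongr with t _ i _
        · exact hr0 i
        · exact expect_charged_le σ π hpv0 hpv1 (hp i) t
    _ = _ := by
        simp only [funext (reward_eq_sum σ r), expect_sum, expect_const_mul, mul_sub,
          Finset.mul_sum, Finset.sum_sub_distrib, mul_left_comm (r _)]

end Lost

theorem lost_le_geometric_refined_general
    (N T : ℕ)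
    (r : Fin N → ℝ) (hr0 : ∀ i, 0 ≤ r i)
    (Nbr : Fin T → Finset (Fin N))
    (pv : Fin N → ℝ) (hpv0 : ∀ i, 0 ≤ pv i) (hpv1 : ∀ i, pv i ≤ 1)
    (p : ℝ) (hp : p = ⨅ i, pv i)
    (π : Policy N T Nbr) :
    lost N T Nbr r pv π
      ≤ (1 - p) * (greedyVal N T Nbr r pv
          - ∑ t : Fin T, ∑ i : Fin N, r i *
              expect pv (fun ω =>
                if act π ω t = some i ∧ act (greedy N T Nbr) ω t = some i
                then 1 else 0)) := by
  have hp_le (i : Fin N) : p ≤ pv i := hp ▸ ciInf_le (Set.finite_range pv).bddBelow i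
  refine le_trans (expect_mono hpv0 hpv1 fun ω => ?_)
    (expect_sum_held_le (greedy N T Nbr) π r hr0 hpv0 hpv1 hp_le)
  refine Finset.sum_le_sum fun t _ => Finset.sum_le_sum fun i _ => ?_
  split_ifs with hlost hheld
  · exact le_rfl
  · exact absurd ⟨hlost.1, hlost.2 i le_rfl⟩ hheld
  · exact hr0 i
  · exact le_rfl

/-- **Proposition 3.**  Under the shared-Bernoulli coupling of Greedy and any
benchmark policy `π` (in particular the optimal clairvoyant policy `OPT`) with
geometric usage durations `F i = Geometric (pv i)`, if `p = min_i pv i` then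
`LOST ≤ (1 - p) · ( Greedy(I) − Σ_t Σ_i r i · Pr(A*_t = A_t = i) )`. -/
theorem lost_le_geometric_refined
    (N T : ℕ) (hN : 0 < N)
    (r : Fin N → ℝ) (hr0 : ∀ i, 0 ≤ r i) (hrmono : Monotone r)
    (Nbr : Fin T → Finset (Fin N))
    (pv : Fin N → ℝ) (hpv0 : ∀ i, 0 ≤ pv i) (hpv1 : ∀ i, pv i ≤ 1)
    (p : ℝ) (hp : p = ⨅ i, pv i)
    (π : Policy N T Nbr) :
    lost N T Nbr r pv π
      ≤ (1 - p) * (greedyVal N T Nbr r pv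
          - ∑ t : Fin T, ∑ i : Fin N, r i *
              expect pv (fun ω =>
                if act π ω t = some i ∧ act (greedy N T Nbr) ω t = some i
                then 1 else 0)) :=
  lost_le_geometric_refined_general N T r hr0 Nbr pv hpv0 hpv1 p hp π
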